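/- arXiv:1308.2396 — 4 statements merged into one kernel-verified Lean document; each statement's English description precedes it below -/
import Mathlib

section
/- Let 𝔤 = L_n (n ≥ 4) over an infinite field K. If φ is a Lie algebra automorphism of 𝔤 commuting with φ_{u,t} for all u, t ∈ K^×, then φ = φ_{a,b} for some a, b ∈ K^×; i.e., the torus D = {φ_{u,t} : u,t ∈ K^×} is its own centralizer in Aut(𝔤). -/
/-!
The weights `i ↦ u^(i-1) t` (and `u` at `i = 0`) of the torus on the basis are pairwise distinct
characters of `Kˣ × Kˣ` once `K` is infinite, so anything commuting with the torus preserves every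
weight line and is diagonal in the basis. A diagonal automorphism with coefficients `Dᵢ` must
satisfy `D_{i+1} = D₀ Dᵢ` because `[X₁, Xᵢ] = X_{i+1}`, hence `Dᵢ = D₀^(i-1) D₁`, which is the
weight of the torus element `φ_{D₀,D₁}`.
-/

-- The eigenvalue of `φ_{u,t}` on `X_{i+1}`, the basis vector indexed by `i`.
def torusWeight {K : Type*} [Monoid K] (u t : K) (i : ℕ) : K :=
  if i = 0 then u else u ^ (i - 1) * t

open Polynomial in
theorem exists_units_pow_ne_pow (K : Type*) [Field K] [Infinite K] {a b : ℕ} (hab : a ≠ b) :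
    ∃ u : Kˣ, (u : K) ^ a ≠ (u : K) ^ b := by
  have hp : (X * (X ^ a - X ^ b) : K[X]) ≠ 0 := by
    intro h
    simpa [coeff_X_pow, hab] using congrArg (coeff · (a + 1)) h
  obtain ⟨x, hx⟩ : ∃ x : K, x * (x ^ a - x ^ b) ≠ 0 := by
    by_contra! h
    exact hp (Polynomial.funext fun x ↦ by simpa using h x)
  obtain ⟨hx0, hxab⟩ := mul_ne_zero_iff.mp hx
  exact ⟨Units.mk0 x hx0, sub_ne_zero.mp hxab⟩

theorem exists_torusWeight_ne (K : Type*) [Field K] [Infinite K] {i j : ℕ} (hij : i ≠ j) :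
    ∃ u t : Kˣ, torusWeight (u : K) t i ≠ torusWeight (u : K) t j := by
  obtain ⟨v, hv⟩ := exists_units_pow_ne_pow K zero_ne_one
  rw [pow_zero, pow_one] at hv
  rcases Nat.eq_zero_or_pos i with rfl | hi
  · exact ⟨1, v, by simpa [torusWeight, hij.symm] using hv⟩
  rcases Nat.eq_zero_or_pos j with rfl | hj
  · exact ⟨1, v, by simpa [torusWeight, hi.ne'] using hv.symm⟩
  obtain ⟨u, hu⟩ := exists_units_pow_ne_pow K (a := i - 1) (b := j - 1) (by omega)
  exact ⟨u, 1, by simpa [torusWeight, hi.ne', hj.ne'] using hu⟩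

theorem Module.Basis.repr_apply_of_apply_eq_smul {ι R M : Type*} [CommRing R]
    [AddCommGroup M] [Module R M] (b : Basis ι R M) {g : M →ₗ[R] M} {χ : ι → R}
    (hg : ∀ i, g (b i) = χ i • b i) (x : M) (j : ι) :
    b.repr (g x) j = χ j * b.repr x j := by
  have : b.coord j ∘ₗ g = χ j • b.coord j :=
    b.ext fun i ↦ by
      by_cases h : i = j
      · subst h; simp [hg]
      · simp [hg, h]
  exact LinearMap.congr_fun this x

theorem Module.Basis.apply_eq_repr_smul_of_commute {ι R M S : Type*} [CommRing R]
    [NoZeroDivisors R] [AddCommGroup M] [Module R M] (b : Basis ι R M)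
    {g : S → M →ₗ[R] M} {χ : S → ι → R} (hg : ∀ s i, g s (b i) = χ s i • b i)
    (hsep : ∀ i j, i ≠ j → ∃ s, χ s i ≠ χ s j) {f : M →ₗ[R] M}
    (hf : ∀ s x, f (g s x) = g s (f x)) (i : ι) :
    f (b i) = b.repr (f (b i)) i • b i := by
  refine b.repr.injective (Finsupp.ext fun j ↦ ?_)
  by_cases hji : j = i
  · subst hji; simp
  obtain ⟨s, hs⟩ := hsep j i hji
  have hcoord : χ s j * b.repr (f (b i)) j = χ s i * b.repr (f (b i)) j := by
    rw [← b.repr_apply_of_apply_eq_smul (hg s), ← hf, hg, map_smul]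
    simp
  have hzero : (χ s j - χ s i) * b.repr (f (b i)) j = 0 := by rw [sub_mul, hcoord, sub_self]
  simp [(mul_eq_zero.mp hzero).resolve_left (sub_ne_zero.mpr hs), Ne.symm hji]

theorem LieHom.eq_mul_of_lie_eq {R L : Type*} [CommRing R] [IsDomain R] [LieRing L]
    [LieAlgebra R L] [Module.IsTorsionFree R L] (f : L →ₗ⁅R⁆ L) {x y z : L} {a c d : R}
    (hx : f x = a • x) (hy : f y = c • y) (hz : f z = d • z) (hxy : ⁅x, y⁆ = z) (hz0 : z ≠ 0) :
    d = a * c := by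
  refine smul_left_injective R hz0 (?_ : d • z = (a * c) • z)
  rw [← hz, ← hxy, LieHom.map_lie, hx, hy, smul_lie, lie_smul, smul_smul]

theorem eq_pow_mul_of_succ_eq_mul {M : Type*} [Monoid M] {d : ℕ → M} {a : M} {m : ℕ}
    (h : ∀ k, 1 ≤ k → k < m → d (k + 1) = a * d k) {k : ℕ} (hk : 1 ≤ k) (hkm : k ≤ m) :
    d k = a ^ (k - 1) * d 1 := by
  induction k, hk using Nat.le_induction with
  | base => simp
  | succ k hk ih =>
    rw [h k hk (by omega), ih (by omega), ← mul_assoc, ← pow_succ', Nat.sub_add_cancel hk,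
      Nat.add_sub_cancel]

theorem eq_torusWeight_of_apply_basis_eq_smul {K L : Type*} [Field K] [LieRing L]
    [LieAlgebra K L] {n : ℕ} (hn : 2 ≤ n) (b : Module.Basis (Fin n) K L)
    (hbr : ∀ i : ℕ, ∀ _ : 1 ≤ i, ∀ _ : i ≤ n - 2,
      ⁅b ⟨0, by omega⟩, b ⟨i, by omega⟩⁆ = b ⟨i + 1, by omega⟩)
    (f : L →ₗ⁅K⁆ L) {D : Fin n → K} (hD : ∀ i, f (b i) = D i • b i) (i : Fin n) :
    D i = torusWeight (D ⟨0, by omega⟩) (D ⟨1, by omega⟩) i := by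
  set d : ℕ → K := fun k ↦ if h : k < n then D ⟨k, h⟩ else 0
  have hd : ∀ k (h : k < n), D ⟨k, h⟩ = d k := fun k h ↦ by simp [d, h]
  have hrec : ∀ k, 1 ≤ k → k < n - 1 → d (k + 1) = d 0 * d k := by
    intro k hk hkn
    rw [← hd _ (by omega), ← hd _ (by omega), ← hd _ (by omega)]
    exact f.eq_mul_of_lie_eq (hD _) (hD _) (hD _) (hbr k hk (by omega)) (b.ne_zero _)
  obtain ⟨i, hi⟩ := i
  rcases Nat.eq_zero_or_pos i with rfl | hi0
  · simp [torusWeight]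
  · simp only [torusWeight, hi0.ne', if_false, hd]
    exact eq_pow_mul_of_succ_eq_mul hrec hi0 (by omega)

/-- For `𝔤 = Lₙ` (`n ≥ 4`) over an infinite field, any Lie algebra automorphism `φ`
commuting with every `φ_{u,t}` (where `φ_{u,t}(X₁) = u X₁`, `φ_{u,t}(Xᵢ) = u^{i-2} t Xᵢ`)
is itself of the form `φ_{a,c}`: the torus `D = {φ_{u,t}}` is its own centralizer in `Aut 𝔤`.
Here `b i = X_{i+1}`. -/
theorem stmt7 (K L : Type*) [Field K] [Infinite K] [LieRing L] [LieAlgebra K L]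
    (n : ℕ) (hn : 4 ≤ n) (b : Module.Basis (Fin n) K L)
    (hbr : ∀ i : ℕ, ∀ _ : 1 ≤ i, ∀ _ : i ≤ n - 2,
      ⁅b ⟨0, by omega⟩, b ⟨i, by omega⟩⁆ = b ⟨i + 1, by omega⟩)
    (Φ : Kˣ → Kˣ → (L ≃ₗ⁅K⁆ L))
    (hΦ : ∀ (u t : Kˣ) (i : Fin n), Φ u t (b i) =
      (if i.val = 0 then (u : K) else (u : K) ^ (i.val - 1) * (t : K)) • b i)
    (φ : L ≃ₗ⁅K⁆ L)
    (hcomm : ∀ (u t : Kˣ) (x : L), φ (Φ u t x) = Φ u t (φ x)) :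
    ∃ a c : Kˣ, ∀ i : Fin n, φ (b i) =
      (if i.val = 0 then (a : K) else (a : K) ^ (i.val - 1) * (c : K)) • b i := by
  set D : Fin n → K := fun i ↦ b.repr (φ (b i)) i
  have hdiag : ∀ i, φ (b i) = D i • b i :=
    b.apply_eq_repr_smul_of_commute (g := fun s : Kˣ × Kˣ ↦ (Φ s.1 s.2).toLinearMap)
      (χ := fun s i ↦ torusWeight (s.1 : K) s.2 i) (fun s ↦ hΦ s.1 s.2)
      (fun i j hij ↦ by
        obtain ⟨u, t, h⟩ := exists_torusWeight_ne K (Fin.val_injective.ne hij)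
        exact ⟨(u, t), h⟩)
      (f := φ.toLinearMap) (fun s ↦ hcomm s.1 s.2)
  have hD : ∀ i, D i = torusWeight (D ⟨0, by omega⟩) (D ⟨1, by omega⟩) i :=
    eq_torusWeight_of_apply_basis_eq_smul (by omega) b hbr φ hdiag
  have hD0 : ∀ i, D i ≠ 0 := fun i h ↦
    b.ne_zero i (φ.injective ((hdiag i).trans (by rw [h, zero_smul, map_zero])))
  refine ⟨Units.mk0 _ (hD0 ⟨0, by omega⟩), Units.mk0 _ (hD0 ⟨1, by omega⟩), fun i ↦ ?_⟩
  rw [hdiag i, hD i]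
  rfl
end

section
/- Let 𝔤 be an n-dimensional filiform Lie algebra over an algebraically closed field K of characteristic ≠ 2, with n ≥ 4. Then the automorphism group Aut(𝔤) is a solvable group. -/
/-- The group of Lie algebra automorphisms of `L`, realized as the subgroup of linear
automorphisms preserving the bracket. -/
def lieAut (K L : Type*) [Field K] [LieRing L] [LieAlgebra K L] : Subgroup (L ≃ₗ[K] L) where
  carrier := {e | ∀ x y : L, e ⁅x, y⁆ = ⁅e x, e y⁆}
  one_mem' := by intro x y; rfl
  mul_mem' := by
    intro e f he hf x y
    show e (f ⁅x, y⁆) = ⁅e (f x), e (f y)⁆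
    rw [hf, he]
  inv_mem' := by
    intro e he x y
    show e.symm ⁅x, y⁆ = ⁅e.symm x, e.symm y⁆
    apply e.injective
    rw [he, e.apply_symm_apply, e.apply_symm_apply, e.apply_symm_apply]

/-!
The dimensions of the lower central series `C^k` of a filiform Lie algebra drop by exactly one
at each step (the derived algebra `C^1` has codimension two, since codimension one would force
`C^2 = C^1`). Together with the centralizer of `C^(n-3)`, a hyperplane containing `C^1`, the
`C^k` form a complete flag `0 = C^(n-1) < C^(n-2) < ⋯ < C^1 < H < L` that every automorphism
preserves.

A group of linear automorphisms preserving a complete flag `W` is solvable: each element acts by a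
scalar on every line `W i ⧸ W (i - 1)`, so commutators move `W i` into `W (i - 1)`, and the
commutator of elements moving `W i` into `W (i - j)` and into `W (i - k)` moves it into
`W (i - j - k)`. Hence the `(m + 1)`-st derived subgroup moves `W i` into `W (i - 2 ^ m)` and is
eventually trivial.
-/

open Module Submodule

section LinearAlgebra
variable {K V : Type*} [Field K] [AddCommGroup V] [Module K V] {A B : Submodule K V}

theorem mem_sup_span_singleton_iff {x v : V} :
    x ∈ A ⊔ K ∙ v ↔ ∃ a ∈ A, ∃ c : K, a + c • v = x := by
  simp only [mem_sup, mem_span_singleton, exists_exists_eq_and]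

variable [FiniteDimensional K V]

theorem exists_sup_span_singleton_eq_of_finrank_le_succ (hAB : A ≤ B)
    (hrank : finrank K B ≤ finrank K A + 1) : ∃ v : V, A ⊔ K ∙ v = B := by
  by_cases hBA : B ≤ A
  · exact ⟨0, by rw [span_zero_singleton, sup_bot_eq, le_antisymm hAB hBA]⟩
  obtain ⟨v, hvB, hvA⟩ := SetLike.not_le_iff_exists.mp hBA
  refine ⟨v, eq_of_le_of_finrank_le (sup_le hAB ((span_singleton_le_iff_mem v B).mpr hvB)) ?_⟩
  exact hrank.trans <| finrank_lt_finrank_of_lt <|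
    left_lt_sup.mpr fun h => hvA ((span_singleton_le_iff_mem v A).mp h)

theorem exists_sub_smul_mem_of_finrank_le_succ (hAB : A ≤ B)
    (hrank : finrank K B ≤ finrank K A + 1) {f : V →ₗ[K] V}
    (hfA : ∀ x ∈ A, f x ∈ A) (hfB : ∀ x ∈ B, f x ∈ B) :
    ∃ c : K, ∀ x ∈ B, f x - c • x ∈ A := by
  obtain ⟨v, hB⟩ := exists_sup_span_singleton_eq_of_finrank_le_succ hAB hrank
  have hvB : v ∈ B := hB ▸ mem_sup_right (mem_span_singleton_self v)
  obtain ⟨a, ha, c, hfv⟩ := mem_sup_span_singleton_iff.mp (hB ▸ hfB v hvB)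
  refine ⟨c, fun x hx => ?_⟩
  obtain ⟨a', ha', t, rfl⟩ := mem_sup_span_singleton_iff.mp (hB ▸ hx)
  have : f (a' + t • v) - c • (a' + t • v) = (f a' - c • a') + t • a := by
    rw [map_add, map_smul, ← hfv]; module
  rw [this]
  exact A.add_mem (A.sub_mem (hfA a' ha') (A.smul_mem c ha')) (A.smul_mem t ha)

theorem apply_apply_sub_mem_of_finrank_le_succ (hAB : A ≤ B)
    (hrank : finrank K B ≤ finrank K A + 1) {f g : V →ₗ[K] V}
    (hfA : ∀ x ∈ A, f x ∈ A) (hfB : ∀ x ∈ B, f x ∈ B)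
    (hgA : ∀ x ∈ A, g x ∈ A) (hgB : ∀ x ∈ B, g x ∈ B) {x : V} (hx : x ∈ B) :
    f (g x) - g (f x) ∈ A := by
  obtain ⟨c, hc⟩ := exists_sub_smul_mem_of_finrank_le_succ hAB hrank hfA hfB
  have : f (g x) - g (f x) = (f (g x) - c • g x) - g (f x - c • x) := by
    rw [map_sub, map_smul]; abel
  rw [this]
  exact A.sub_mem (hc _ (hgB x hx)) (hgA _ (hc x hx))

end LinearAlgebra

section Flag
open scoped commutatorElement
variable {K V : Type*} [Field K] [AddCommGroup V] [Module K V] (W : ℕ → Submodule K V)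

def flagStabilizer : Subgroup (V ≃ₗ[K] V) where
  carrier := {g | ∀ i x, g x ∈ W i ↔ x ∈ W i}
  one_mem' _ _ := Iff.rfl
  mul_mem' hg hh i x := (hg i _).trans (hh i x)
  inv_mem' {g} hg i x := by
    rw [← hg i, LinearEquiv.coe_inv, LinearEquiv.apply_symm_apply]

variable {W}

theorem le_flagStabilizer {G : Subgroup (V ≃ₗ[K] V)}
    (hG : ∀ g ∈ G, ∀ i, ∀ x ∈ W i, g x ∈ W i) : G ≤ flagStabilizer W := by
  intro g hg i x
  refine ⟨fun hx => ?_, hG g hg i x⟩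
  simpa using hG g⁻¹ (G.inv_mem hg) i (g x) hx

variable (W) in
/-- `i - j` truncates: for `j ≥ i` the condition is `g x - x ∈ W 0`. -/
def flagShift (j : ℕ) : Subgroup (flagStabilizer W) where
  carrier := {g | ∀ i, ∀ x ∈ W i, (g : V ≃ₗ[K] V) x - x ∈ W (i - j)}
  one_mem' i x _ := by simp
  mul_mem' {g h} hg hh i x hx := by
    obtain ⟨g, hgW⟩ := g
    obtain ⟨h, _⟩ := h
    have : (g * h) x - x = g (h x - x) + (g x - x) := by
      rw [LinearEquiv.mul_apply, map_sub]; abel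
    exact this ▸ add_mem ((hgW _ _).mpr (hh i x hx)) (hg i x hx)
  inv_mem' {g} hg i x hx := by
    obtain ⟨g, hgW⟩ := g
    have hy : g⁻¹ x ∈ W i := ((flagStabilizer W).inv_mem hgW i x).mpr hx
    have : g⁻¹ x - x = -(g (g⁻¹ x) - g⁻¹ x) := by simp
    exact this ▸ neg_mem (hg i _ hy)

theorem commutatorElement_apply_sub_mem {g h : V ≃ₗ[K] V} {A B : Submodule K V}
    (hg : ∀ x, g x ∈ B ↔ x ∈ B) (hh : ∀ x, h x ∈ B ↔ x ∈ B)
    (hgh : ∀ y ∈ B, g (h y) - h (g y) ∈ A) {x : V} (hx : x ∈ B) : ⁅g, h⁆ x - x ∈ A := by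
  set y := g⁻¹ (h⁻¹ x)
  have hy : y ∈ B := by simpa [y, ← hg (g.symm _), ← hh (h.symm x)] using hx
  have : ⁅g, h⁆ x - x = g (h y) - h (g y) := by simp [commutatorElement_def, y]
  exact this ▸ hgh y hy

theorem commutator_flagShift_le (j k : ℕ) :
    ⁅flagShift W j, flagShift W k⁆ ≤ flagShift W (j + k) := by
  rw [Subgroup.commutator_le]
  rintro ⟨g, hgW⟩ hg ⟨h, hhW⟩ hh i x hx
  refine commutatorElement_apply_sub_mem (hgW i) (hhW i) (fun y hy => ?_) hx
  have : g (h y) - h (g y) = (g (h y - y) - (h y - y)) - (h (g y - y) - (g y - y)) := by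
    simp only [map_sub]; abel
  rw [this]
  refine sub_mem ?_ ?_
  · simpa [Nat.sub_sub, add_comm] using hg _ _ (hh i y hy)
  · simpa [Nat.sub_sub] using hh _ _ (hg i y hy)

theorem commutator_le_flagShift_one [FiniteDimensional K V] (hmono : Monotone W)
    (hrank : ∀ i, finrank K (W (i + 1)) ≤ finrank K (W i) + 1) :
    commutator (flagStabilizer W) ≤ flagShift W 1 := by
  rw [commutator_def, Subgroup.commutator_le]
  rintro ⟨g, hgW⟩ - ⟨h, hhW⟩ - i x hx
  have hrank' : finrank K (W i) ≤ finrank K (W (i - 1)) + 1 := by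
    cases i with
    | zero => exact Nat.le_succ _
    | succ i => exact hrank i
  refine commutatorElement_apply_sub_mem (hgW i) (hhW i) (fun y hy => ?_) hx
  exact apply_apply_sub_mem_of_finrank_le_succ (f := g.toLinearMap) (g := h.toLinearMap)
    (hmono (Nat.sub_le i 1)) hrank' (fun z => (hgW _ z).mpr) (fun z => (hgW _ z).mpr)
    (fun z => (hhW _ z).mpr) (fun z => (hhW _ z).mpr) hy

theorem flagShift_eq_bot {N j : ℕ} (hbot : W 0 = ⊥) (htop : W N = ⊤) (hj : N ≤ j) :
    flagShift W j = ⊥ := by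
  refine (Subgroup.eq_bot_iff_forall _).mpr fun g hg => Subtype.ext <| LinearEquiv.ext fun x => ?_
  have := hg N x (htop ▸ mem_top)
  rwa [Nat.sub_eq_zero_of_le hj, hbot, mem_bot, sub_eq_zero] at this

theorem isSolvable_flagStabilizer [FiniteDimensional K V] {N : ℕ} (hbot : W 0 = ⊥)
    (htop : W N = ⊤) (hmono : Monotone W)
    (hrank : ∀ i, finrank K (W (i + 1)) ≤ finrank K (W i) + 1) :
    Group.IsSolvable (flagStabilizer W) := by
  have hderived : ∀ m, derivedSeries (flagStabilizer W) (m + 1) ≤ flagShift W (2 ^ m) := by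
    intro m
    induction m with
    | zero => exact commutator_le_flagShift_one hmono hrank
    | succ m ih =>
      rw [derivedSeries_succ, pow_succ, mul_two]
      exact (Subgroup.commutator_mono ih ih).trans (commutator_flagShift_le _ _)
  refine ⟨⟨N + 1, le_bot_iff.mp ?_⟩⟩
  exact (hderived N).trans (flagShift_eq_bot hbot htop Nat.lt_two_pow_self.le).le

end Flag

section LowerCentralSeries
open LieModule LieSubmodule

theorem LieModule.lowerCentralSeries_add_eq_of_succ_eq {R L M : Type*} [CommRing R] [LieRing L]
    [LieAlgebra R L] [AddCommGroup M] [Module R M] [LieRingModule L M] {k : ℕ}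
    (h : lowerCentralSeries R L M (k + 1) = lowerCentralSeries R L M k) (m : ℕ) :
    lowerCentralSeries R L M (k + m) = lowerCentralSeries R L M k := by
  induction m with
  | zero => rfl
  | succ m ih => rw [← add_assoc, lowerCentralSeries_succ, ih, ← lowerCentralSeries_succ, h]

theorem LieModule.lowerCentralSeries_succ_lt {R L M : Type*} [CommRing R] [LieRing L]
    [LieAlgebra R L] [AddCommGroup M] [Module R M] [LieRingModule L M] {k l : ℕ}
    (hl : lowerCentralSeries R L M l = ⊥) (hk : lowerCentralSeries R L M k ≠ ⊥) :
    lowerCentralSeries R L M (k + 1) < lowerCentralSeries R L M k := by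
  refine (antitone_lowerCentralSeries R L M k.le_succ).lt_of_ne fun h => hk ?_
  rw [← lowerCentralSeries_add_eq_of_succ_eq h l, _root_.eq_bot_iff, ← hl]
  exact antitone_lowerCentralSeries R L M (Nat.le_add_left l k)

variable {K L : Type*} [Field K] [LieRing L] [LieAlgebra K L]

theorem lie_mem_lowerCentralSeries_add {i j : ℕ} {x y : L}
    (hx : x ∈ lowerCentralSeries K L L i) (hy : y ∈ lowerCentralSeries K L L j) :
    ⁅x, y⁆ ∈ lowerCentralSeries K L L (i + j + 1) := by
  induction i generalizing x j y with
  | zero =>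
    rw [zero_add, lowerCentralSeries_succ]
    exact lie_mem_lie (mem_top x) hy
  | succ i ih =>
    rw [lowerCentralSeries_succ, ← mem_toSubmodule, lieIdeal_oper_eq_linear_span'] at hx
    induction hx using Submodule.span_induction with
    | mem _ hx =>
      obtain ⟨a, -, w, hw, rfl⟩ := hx
      rw [lie_lie]
      refine sub_mem ?_ ?_
      · rw [show i + 1 + j + 1 = i + j + 1 + 1 by omega, lowerCentralSeries_succ]
        exact lie_mem_lie (mem_top a) (ih hw hy)
      · have hay : ⁅a, y⁆ ∈ lowerCentralSeries K L L (j + 1) := by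
          rw [lowerCentralSeries_succ]; exact lie_mem_lie (mem_top a) hy
        simpa only [add_right_comm, add_assoc] using ih hw hay
    | zero => simp
    | add _ _ _ _ hx hx' => rw [add_lie]; exact add_mem hx hx'
    | smul c _ _ hx => rw [smul_lie]; exact smul_mem _ c hx

theorem lowerCentralSeries_two_eq_one_of_finrank_le [FiniteDimensional K L]
    (h : finrank K L ≤ finrank K (lowerCentralSeries K L L 1).toSubmodule + 1) :
    lowerCentralSeries K L L 2 = lowerCentralSeries K L L 1 := by
  obtain ⟨v, hv⟩ := exists_sup_span_singleton_eq_of_finrank_le_succ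
    (A := (lowerCentralSeries K L L 1).toSubmodule) le_top (by rwa [finrank_top])
  refine (antitone_lowerCentralSeries K L L one_le_two).antisymm ?_
  change lowerCentralSeries K L L (0 + 1) ≤ _
  rw [lowerCentralSeries_succ, lowerCentralSeries_zero, lie_le_iff]
  intro x _ y _
  obtain ⟨a, ha, s, rfl⟩ := mem_sup_span_singleton_iff.mp (hv ▸ Submodule.mem_top (x := x))
  obtain ⟨b, hb, t, rfl⟩ := mem_sup_span_singleton_iff.mp (hv ▸ Submodule.mem_top (x := y))
  rw [add_lie, smul_lie, lie_add v, lie_smul, lie_self, smul_zero, add_zero]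
  exact add_mem (lie_mem_lowerCentralSeries_add (j := 0) ha (by simp))
    (smul_mem _ s (lie_mem_lowerCentralSeries_add (i := 0) (by simp) hb))

end LowerCentralSeries

section Centralizer
open LieModule LieSubmodule
variable {K L : Type*} [Field K] [LieRing L] [LieAlgebra K L]

def lieCentralizer (S : Submodule K L) : Submodule K L where
  carrier := {x | ∀ z ∈ S, ⁅x, z⁆ = 0}
  add_mem' ha hb z hz := by rw [add_lie, ha z hz, hb z hz, add_zero]
  zero_mem' z _ := zero_lie z
  smul_mem' c x hx z hz := by rw [smul_lie, hx z hz, smul_zero]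

theorem mem_lieCentralizer {S : Submodule K L} {x : L} :
    x ∈ lieCentralizer S ↔ ∀ z ∈ S, ⁅x, z⁆ = 0 :=
  Iff.rfl

theorem lieCentralizer_lowerCentralSeries_ne_top {k : ℕ}
    (h : lowerCentralSeries K L L (k + 1) ≠ ⊥) :
    lieCentralizer (lowerCentralSeries K L L k).toSubmodule ≠ ⊤ := by
  intro htop
  apply h
  rw [lowerCentralSeries_succ, lie_eq_bot_iff]
  exact fun x _ z hz => mem_lieCentralizer.mp (htop ▸ Submodule.mem_top) z hz

theorem lowerCentralSeries_le_lieCentralizer {i j : ℕ}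
    (h : lowerCentralSeries K L L (i + j + 1) = ⊥) :
    (lowerCentralSeries K L L i).toSubmodule ≤
      lieCentralizer (lowerCentralSeries K L L j).toSubmodule := fun _ hx _ hz => by
  have := lie_mem_lowerCentralSeries_add hx hz
  rwa [h, LieSubmodule.mem_bot] at this

theorem finrank_le_finrank_lieCentralizer_add [FiniteDimensional K L] {k : ℕ}
    (hbot : lowerCentralSeries K L L (k + 2) = ⊥)
    (hrank : finrank K (lowerCentralSeries K L L k).toSubmodule ≤
      finrank K (lowerCentralSeries K L L (k + 1)).toSubmodule + 1) :
    finrank K L ≤ finrank K (lieCentralizer (lowerCentralSeries K L L k).toSubmodule) +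
      finrank K (lowerCentralSeries K L L (k + 1)).toSubmodule := by
  obtain ⟨z, hz⟩ := exists_sup_span_singleton_eq_of_finrank_le_succ
    ((toSubmodule_le_toSubmodule _ _).mpr (antitone_lowerCentralSeries K L L k.le_succ)) hrank
  have hzk : z ∈ (lowerCentralSeries K L L k).toSubmodule :=
    hz ▸ Submodule.mem_sup_right (Submodule.mem_span_singleton_self z)
  have hker : LinearMap.ker (LieAlgebra.ad K L z) ≤
      lieCentralizer (lowerCentralSeries K L L k).toSubmodule := by
    intro x hx y hy
    obtain ⟨a, ha, c, rfl⟩ := mem_sup_span_singleton_iff.mp (hz ▸ hy)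
    have hxa : ⁅x, a⁆ = 0 := by
      have := lie_mem_lowerCentralSeries_add (i := 0) (x := x) (by simp) ha
      rwa [zero_add, hbot, LieSubmodule.mem_bot] at this
    rw [LinearMap.mem_ker, LieAlgebra.ad_apply, ← lie_skew, neg_eq_zero] at hx
    rw [lie_add, lie_smul, hxa, hx, smul_zero, add_zero]
  have hrange : LinearMap.range (LieAlgebra.ad K L z) ≤
      (lowerCentralSeries K L L (k + 1)).toSubmodule := by
    rintro _ ⟨x, rfl⟩
    exact lie_mem_lowerCentralSeries_add (j := 0) hzk (by simp)
  have := LinearMap.finrank_range_add_finrank_ker (LieAlgebra.ad K L z)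
  have := Submodule.finrank_mono hker
  have := Submodule.finrank_mono hrange
  omega

end Centralizer

section Automorphisms
open LieModule
variable {K L : Type*} [Field K] [LieRing L] [LieAlgebra K L] {e : L ≃ₗ[K] L}

theorem apply_mem_lowerCentralSeries_of_mem_lieAut (he : e ∈ lieAut K L) {k : ℕ} {x : L}
    (hx : x ∈ lowerCentralSeries K L L k) : e x ∈ lowerCentralSeries K L L k :=
  LieIdeal.map_lowerCentralSeries_le k (f := { (e : L →ₗ[K] L) with map_lie' := he _ _ })
    (LieIdeal.mem_map hx)

theorem apply_mem_lieCentralizer_of_mem_lieAut {S : Submodule K L}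
    (hS : ∀ f ∈ lieAut K L, ∀ z ∈ S, f z ∈ S) (he : e ∈ lieAut K L) {x : L}
    (hx : x ∈ lieCentralizer S) : e x ∈ lieCentralizer S := by
  intro z hz
  have hz' : e.symm z ∈ S := hS e⁻¹ ((lieAut K L).inv_mem he) z hz
  rw [← e.apply_symm_apply z, ← he, hx _ hz', map_zero]

end Automorphisms

section Filiform
open LieModule LieSubmodule
variable {K L : Type*} [Field K] [LieRing L] [LieAlgebra K L] {n : ℕ}

variable (K L) in
structure IsFiliform (n : ℕ) : Prop where
  finrank_eq : finrank K L = n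
  lowerCentralSeries_ne_bot : lowerCentralSeries K L L (n - 2) ≠ ⊥
  lowerCentralSeries_eq_bot : lowerCentralSeries K L L (n - 1) = ⊥

namespace IsFiliform

theorem lowerCentralSeries_succ_lt (hL : IsFiliform K L n) {k : ℕ} (hk : k ≤ n - 2) :
    lowerCentralSeries K L L (k + 1) < lowerCentralSeries K L L k :=
  LieModule.lowerCentralSeries_succ_lt hL.lowerCentralSeries_eq_bot <|
    ne_bot_of_le_ne_bot hL.lowerCentralSeries_ne_bot (antitone_lowerCentralSeries K L L hk)

variable [FiniteDimensional K L]

theorem finrank_lowerCentralSeries_add_le (hL : IsFiliform K L n) {k d : ℕ}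
    (h : k + d ≤ n - 1) :
    finrank K (lowerCentralSeries K L L (k + d)).toSubmodule + d ≤
      finrank K (lowerCentralSeries K L L k).toSubmodule := by
  induction d with
  | zero => simp
  | succ d ih =>
    have hlt : finrank K (lowerCentralSeries K L L (k + d + 1)).toSubmodule <
        finrank K (lowerCentralSeries K L L (k + d)).toSubmodule :=
      Submodule.finrank_lt_finrank_of_lt <| (toSubmodule_orderEmbedding K L L).strictMono <|
        hL.lowerCentralSeries_succ_lt (by omega)
    have := ih (by omega)
    rw [← add_assoc k d 1]
    omega

theorem finrank_lowerCentralSeries_one_le (hL : IsFiliform K L n) (hn : 3 ≤ n) :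
    finrank K (lowerCentralSeries K L L 1).toSubmodule ≤ n - 2 := by
  by_contra h
  refine (hL.lowerCentralSeries_succ_lt (k := 1) (by omega)).ne ?_
  exact lowerCentralSeries_two_eq_one_of_finrank_le (by rw [hL.finrank_eq]; omega)

theorem finrank_lowerCentralSeries (hL : IsFiliform K L n) (hn : 3 ≤ n) {k : ℕ} (hk1 : 1 ≤ k)
    (hk : k ≤ n - 1) : finrank K (lowerCentralSeries K L L k).toSubmodule = n - 1 - k := by
  have hlow := hL.finrank_lowerCentralSeries_add_le (k := k) (d := n - 1 - k) (by omega)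
  have hup := hL.finrank_lowerCentralSeries_add_le (k := 1) (d := k - 1) (by omega)
  rw [show k + (n - 1 - k) = n - 1 by omega, hL.lowerCentralSeries_eq_bot, bot_toSubmodule,
    finrank_bot] at hlow
  rw [show 1 + (k - 1) = k by omega] at hup
  have := hL.finrank_lowerCentralSeries_one_le hn
  omega

end IsFiliform

variable (K L) in
def filiformFlag (n i : ℕ) : Submodule K L :=
  if i ≤ n - 2 then (lowerCentralSeries K L L (n - 1 - i)).toSubmodule
  else if i = n - 1 then lieCentralizer (lowerCentralSeries K L L (n - 3)).toSubmodule
  else ⊤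

theorem IsFiliform.filiformFlag_zero (hL : IsFiliform K L n) : filiformFlag K L n 0 = ⊥ := by
  simp [filiformFlag, hL.lowerCentralSeries_eq_bot]

theorem filiformFlag_eq_top_of_le {i : ℕ} (hn : 1 ≤ n) (hi : n ≤ i) :
    filiformFlag K L n i = ⊤ := by
  simp only [filiformFlag]
  rw [if_neg (by omega), if_neg (by omega)]

theorem IsFiliform.monotone_filiformFlag (hL : IsFiliform K L n) (hn : 3 ≤ n) :
    Monotone (filiformFlag K L n) := by
  refine monotone_nat_of_le_succ fun i => ?_
  simp only [filiformFlag]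
  split_ifs <;> first
    | omega
    | exact le_rfl
    | exact le_top
    | exact (toSubmodule_le_toSubmodule _ _).mpr (antitone_lowerCentralSeries K L L (by omega))
    | refine lowerCentralSeries_le_lieCentralizer ?_
      rw [show n - 1 - i + (n - 3) + 1 = n - 1 by omega]
      exact hL.lowerCentralSeries_eq_bot

theorem lieAut_le_flagStabilizer_filiformFlag (n : ℕ) :
    lieAut K L ≤ flagStabilizer (filiformFlag K L n) := by
  refine le_flagStabilizer fun e he i x hx => ?_
  simp only [filiformFlag] at hx ⊢
  split_ifs at hx ⊢
  · exact apply_mem_lowerCentralSeries_of_mem_lieAut he hx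
  · exact apply_mem_lieCentralizer_of_mem_lieAut
      (fun f hf z hz => apply_mem_lowerCentralSeries_of_mem_lieAut hf hz) he hx
  · exact Submodule.mem_top

variable [FiniteDimensional K L]

theorem IsFiliform.finrank_lieCentralizer (hL : IsFiliform K L n) (hn : 4 ≤ n) :
    finrank K (lieCentralizer (lowerCentralSeries K L L (n - 3)).toSubmodule) = n - 1 := by
  have hlt := Submodule.finrank_lt <| lieCentralizer_lowerCentralSeries_ne_top (k := n - 3) <| by
    rw [show n - 3 + 1 = n - 2 by omega]
    exact hL.lowerCentralSeries_ne_bot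
  have hle := finrank_le_finrank_lieCentralizer_add (k := n - 3)
    (by rw [show n - 3 + 2 = n - 1 by omega]; exact hL.lowerCentralSeries_eq_bot)
    (by rw [hL.finrank_lowerCentralSeries, hL.finrank_lowerCentralSeries] <;> omega)
  rw [hL.finrank_lowerCentralSeries (by omega) (by omega) (by omega)] at hle
  rw [hL.finrank_eq] at hlt hle
  omega

theorem IsFiliform.finrank_filiformFlag (hL : IsFiliform K L n) (hn : 4 ≤ n) {i : ℕ}
    (hi : i ≤ n) : finrank K (filiformFlag K L n i) = i := by
  rcases (show i ≤ n - 2 ∨ i = n - 1 ∨ i = n by omega) with h | rfl | rfl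
  · rw [filiformFlag, if_pos h, hL.finrank_lowerCentralSeries] <;> omega
  · rw [filiformFlag, if_neg (by omega), if_pos rfl, hL.finrank_lieCentralizer hn]
  · rw [filiformFlag_eq_top_of_le (by omega) le_rfl, finrank_top, hL.finrank_eq]

theorem IsFiliform.finrank_filiformFlag_succ_le (hL : IsFiliform K L n) (hn : 4 ≤ n) (i : ℕ) :
    finrank K (filiformFlag K L n (i + 1)) ≤ finrank K (filiformFlag K L n i) + 1 := by
  by_cases hi : i + 1 ≤ n
  · rw [hL.finrank_filiformFlag hn hi, hL.finrank_filiformFlag hn (by omega)]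
  · rw [filiformFlag_eq_top_of_le (i := i + 1) (by omega) (by omega),
      filiformFlag_eq_top_of_le (i := i) (by omega) (by omega)]
    omega

end Filiform

theorem stmt9_general (K L : Type*) [Field K]
    [LieRing L] [LieAlgebra K L] [Module.Finite K L]
    (n : ℕ) (hn : 4 ≤ n) (hdim : Module.finrank K L = n)
    (hfil1 : LieModule.lowerCentralSeries K L L (n - 2) ≠ ⊥)
    (hfil2 : LieModule.lowerCentralSeries K L L (n - 1) = ⊥) :
    IsSolvable (lieAut K L) := by
  have hL : IsFiliform K L n := ⟨hdim, hfil1, hfil2⟩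
  have := isSolvable_flagStabilizer hL.filiformFlag_zero
    (filiformFlag_eq_top_of_le (by omega) le_rfl) (hL.monotone_filiformFlag (by omega))
    (hL.finrank_filiformFlag_succ_le hn)
  exact Group.isSolvable_of_isSolvable_injective
    (Subgroup.inclusion_injective (lieAut_le_flagStabilizer_filiformFlag n))

/-- The automorphism group of an `n`-dimensional filiform Lie algebra (`n ≥ 4`) over an
algebraically closed field of characteristic `≠ 2` is solvable. -/
theorem stmt9 (K L : Type*) [Field K] [IsAlgClosed K] (hchar : ringChar K ≠ 2)
    [LieRing L] [LieAlgebra K L] [Module.Finite K L]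
    (n : ℕ) (hn : 4 ≤ n) (hdim : Module.finrank K L = n)
    (hfil1 : LieModule.lowerCentralSeries K L L (n - 2) ≠ ⊥)
    (hfil2 : LieModule.lowerCentralSeries K L L (n - 1) = ⊥) :
    IsSolvable (lieAut K L) :=
  stmt9_general K L n hn hdim hfil1 hfil2
end

section
/- Let 𝔤 = L_n and 1 ≤ k ≤ n−2. Define a ℤ_k × ℤ grading by deg X_1 = (1 mod k, 0) and deg X_i = ((i−2) mod k, 1) for i = 2,…,n. Then this is a grading of L_n: for homogeneous basis elements, [𝔤_g, 𝔤_h] ⊆ 𝔤_{g+h}. -/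
/-!
Splitting a basis into fibres of a degree map always gives a direct sum decomposition, and the
bracket is bilinear, so it suffices to check `[X_i, X_j] ∈ 𝔤_{deg X_i + deg X_j}` on basis vectors.
The only nonzero brackets are `[X_1, X_i] = X_{i+1}`, and `deg X_{i+1} = deg X_1 + deg X_i` for
`i ≥ 2` is exactly the shift `(i - 1, 1) = (1, 0) + (i - 2, 1)`.
-/

open Submodule

theorem Module.Basis.isInternal_span_image_fiber {ι R M G : Type*} [Ring R] [AddCommGroup M]
    [Module R M] [DecidableEq G] (b : Module.Basis ι R M) (deg : ι → G) :
    DirectSum.IsInternal fun g => span R (b '' {i | deg i = g}) := by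
  refine DirectSum.isInternal_submodule_of_iSupIndep_of_iSup_eq_top ?_ ?_
  · refine iSupIndep_def.2 fun g => ?_
    have hrest : (⨆ (h) (_ : h ≠ g), span R (b '' {i | deg i = h})) ≤
        span R (b '' {i | deg i ≠ g}) :=
      iSup₂_le fun h hne => span_mono <| Set.image_mono fun i (hi : deg i = h) =>
        show deg i ≠ g from hi ▸ hne
    exact (b.linearIndependent.disjoint_span_image disjoint_compl_right).mono_right hrest
  · rw [eq_top_iff, ← b.span_eq, span_le]
    rintro _ ⟨i, rfl⟩
    exact mem_iSup_of_mem (deg i) (subset_span ⟨i, rfl, rfl⟩)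

theorem lie_mem_span_image_fiber_add {ι R L G : Type*} [CommRing R] [LieRing L]
    [LieAlgebra R L] [Add G] (v : ι → L) (deg : ι → G)
    (hv : ∀ i j, ⁅v i, v j⁆ ∈ span R (v '' {l | deg l = deg i + deg j}))
    {g h : G} {x y : L} (hx : x ∈ span R (v '' {i | deg i = g}))
    (hy : y ∈ span R (v '' {i | deg i = h})) :
    ⁅x, y⁆ ∈ span R (v '' {l | deg l = g + h}) := by
  induction hx, hy using span_induction₂ with
  | mem_mem _ _ hx hy =>
    obtain ⟨i, rfl, rfl⟩ := hx
    obtain ⟨j, rfl, rfl⟩ := hy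
    exact hv i j
  | zero_left => rw [zero_lie]; exact zero_mem _
  | zero_right => rw [lie_zero]; exact zero_mem _
  | add_left _ _ _ _ _ _ h₁ h₂ => rw [add_lie]; exact add_mem h₁ h₂
  | add_right _ _ _ _ _ _ h₁ h₂ => rw [lie_add]; exact add_mem h₁ h₂
  | smul_left _ _ _ _ _ h => rw [smul_lie]; exact smul_mem _ _ h
  | smul_right _ _ _ _ _ h => rw [lie_smul]; exact smul_mem _ _ h

/-- The degree of `X_{i+1}`: indices are shifted by one, as in the basis `b : Fin n → L`. -/
def filiformDeg (k : ℕ) (i : ℕ) : ZMod k × ℤ :=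
  if i = 0 then ((1 : ZMod k), 0) else (((i - 1 : ℕ) : ZMod k), 1)

theorem filiformDeg_succ (k : ℕ) (i : ℕ) (hi : 1 ≤ i) :
    filiformDeg k (i + 1) = filiformDeg k 0 + filiformDeg k i := by
  obtain ⟨j, rfl⟩ := Nat.exists_eq_add_of_le' hi
  simp [filiformDeg, add_comm]

section Filiform

variable {K L : Type*} [CommRing K] [LieRing L] [LieAlgebra K L] {n : ℕ} (v : Fin n → L)
  {G : Type*} (deg : ℕ → G)

theorem lie_first_mem_span_image_fiber [Add G]
    (hshift : ∀ i j l : Fin n, i.val = 0 → 1 ≤ j.val → l.val = j.val + 1 → ⁅v i, v j⁆ = v l)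
    (htop : ∀ i j : Fin n, i.val = 0 → j.val = n - 1 → ⁅v i, v j⁆ = 0)
    (hdeg : ∀ i, 1 ≤ i → deg (i + 1) = deg 0 + deg i) (i j : Fin n) (hi : i.val = 0)
    (hj : 1 ≤ j.val) :
    ⁅v i, v j⁆ ∈ span K (v '' {l | deg l.val = deg 0 + deg j.val}) := by
  by_cases hlast : j.val + 1 < n
  · rw [hshift i j ⟨j.val + 1, hlast⟩ hi hj rfl, ← hdeg j.val hj]
    exact subset_span ⟨_, rfl, rfl⟩
  · rw [htop i j hi (by omega)]
    exact zero_mem _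

theorem lie_mem_span_image_fiber_of_lie_first [AddCommMagma G]
    (hfirst : ∀ i j : Fin n, i.val = 0 → 1 ≤ j.val →
      ⁅v i, v j⁆ ∈ span K (v '' {l | deg l.val = deg 0 + deg j.val}))
    (hcomm : ∀ i j : Fin n, 1 ≤ i.val → 1 ≤ j.val → ⁅v i, v j⁆ = 0) (i j : Fin n) :
    ⁅v i, v j⁆ ∈ span K (v '' {l | deg l.val = deg i.val + deg j.val}) := by
  rcases Nat.eq_zero_or_pos i.val with hi | hi <;>
    rcases Nat.eq_zero_or_pos j.val with hj | hj
  · rw [show i = j from Fin.ext (by omega), lie_self]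
    exact zero_mem _
  · rw [hi]
    exact hfirst i j hi hj
  · rw [← lie_skew, hj, add_comm]
    exact neg_mem (hfirst j i hj hi)
  · rw [hcomm i j hi hj]
    exact zero_mem _

end Filiform

/-- For `𝔤 = Lₙ` and `1 ≤ k ≤ n-2`, the assignment `deg X₁ = (1 mod k, 0)`,
`deg Xᵢ = ((i-2) mod k, 1)` for `2 ≤ i ≤ n` (here `b i = X_{i+1}`) defines a
`ℤ_k × ℤ`-grading of `Lₙ`: the homogeneous components (spans of the basis vectors of a
given degree) form a direct sum with `[𝔤_g, 𝔤_h] ⊆ 𝔤_{g+h}`. -/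
theorem stmt14 (K L : Type*) [Field K] [LieRing L] [LieAlgebra K L]
    (n : ℕ) (hn : 3 ≤ n) (b : Module.Basis (Fin n) K L)
    (hbr : ∀ i : ℕ, ∀ _ : 1 ≤ i, ∀ _ : i ≤ n - 2,
      ⁅b ⟨0, by omega⟩, b ⟨i, by omega⟩⁆ = b ⟨i + 1, by omega⟩)
    (htop : ⁅b ⟨0, by omega⟩, b ⟨n - 1, by omega⟩⁆ = 0)
    (hzero : ∀ i j : Fin n, 1 ≤ i.val → 1 ≤ j.val → ⁅b i, b j⁆ = 0)
    (k : ℕ) :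
    let deg : Fin n → ZMod k × ℤ := fun i =>
      if i.val = 0 then ((1 : ZMod k), 0) else (((i.val - 1 : ℕ) : ZMod k), 1)
    let comp : ZMod k × ℤ → Submodule K L := fun g => Submodule.span K (⇑b '' {i | deg i = g})
    DirectSum.IsInternal comp ∧
      ∀ (g h : ZMod k × ℤ) (x y : L), x ∈ comp g → y ∈ comp h → ⁅x, y⁆ ∈ comp (g + h) := by
  intro deg comp
  have hshift : ∀ i j l : Fin n, i.val = 0 → 1 ≤ j.val → l.val = j.val + 1 →
      ⁅b i, b j⁆ = b l := by
    rintro ⟨i, _⟩ ⟨j, _⟩ ⟨l, _⟩ (rfl : i = 0) hj (rfl : l = j + 1)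
    exact hbr j hj (by omega)
  have htop' : ∀ i j : Fin n, i.val = 0 → j.val = n - 1 → ⁅b i, b j⁆ = 0 := by
    rintro ⟨i, _⟩ ⟨j, _⟩ (rfl : i = 0) (rfl : j = n - 1)
    exact htop
  have hbasis := lie_mem_span_image_fiber_of_lie_first (K := K) b (filiformDeg k)
    (lie_first_mem_span_image_fiber b (filiformDeg k) hshift htop' (filiformDeg_succ k)) hzero
  exact ⟨b.isInternal_span_image_fiber deg, fun _ _ _ _ =>
    lie_mem_span_image_fiber_add b (fun i => filiformDeg k i.val) hbasis⟩
end

section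
/- For each k ≥ 1 let n = k + 5 and let 𝔤 be the (n+1)-dimensional Lie algebra with basis e_0, e_1, …, e_n and nonzero brackets μ(e_0, e_i) = e_{i+1} for 2 ≤ i ≤ k+3, μ(e_1, e_2) = e_4 + e_{k+4}, and μ(e_1, e_i) = e_{i+2} for 3 ≤ i ≤ k+2. Then μ satisfies the Jacobi identity, so 𝔤 is a Lie algebra. -/
/-- `L` carries the structure constants of the `(k+6)`-dimensional algebra
`μ = μ₀ + ψ_{1,4} + ψ_{1,4+k}` on a basis `b` (with `b i = eᵢ`, `i = 0, …, k+5`):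
`μ(e₀, eᵢ) = eᵢ₊₁` for `2 ≤ i ≤ k+3`, `μ(e₁, e₂) = e₄ + e_{k+4}`,
`μ(e₁, eᵢ) = eᵢ₊₂` for `3 ≤ i ≤ k+2`, and all other brackets of basis vectors zero. -/
def Stmt18Structure (K : Type*) [Field K] (k : ℕ) (hk : 1 ≤ k)
    (L : Type*) [LieRing L] [LieAlgebra K L] : Prop :=
  ∃ b : Module.Basis (Fin (k + 6)) K L,
    (∀ i : ℕ, ∀ _ : 2 ≤ i, ∀ _ : i ≤ k + 3,
      ⁅b ⟨0, by omega⟩, b ⟨i, by omega⟩⁆ = b ⟨i + 1, by omega⟩) ∧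
    ⁅b ⟨1, by omega⟩, b ⟨2, by omega⟩⁆ = b ⟨4, by omega⟩ + b ⟨k + 4, by omega⟩ ∧
    (∀ i : ℕ, ∀ _ : 3 ≤ i, ∀ _ : i ≤ k + 2,
      ⁅b ⟨1, by omega⟩, b ⟨i, by omega⟩⁆ = b ⟨i + 2, by omega⟩) ∧
    ⁅b ⟨0, by omega⟩, b ⟨1, by omega⟩⁆ = 0 ∧
    ⁅b ⟨0, by omega⟩, b ⟨k + 4, by omega⟩⁆ = 0 ∧
    ⁅b ⟨0, by omega⟩, b ⟨k + 5, by omega⟩⁆ = 0 ∧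
    ⁅b ⟨1, by omega⟩, b ⟨k + 3, by omega⟩⁆ = 0 ∧
    ⁅b ⟨1, by omega⟩, b ⟨k + 4, by omega⟩⁆ = 0 ∧
    ⁅b ⟨1, by omega⟩, b ⟨k + 5, by omega⟩⁆ = 0 ∧
    (∀ i j : Fin (k + 6), 2 ≤ i.val → i.val < j.val → ⁅b i, b j⁆ = 0)

/-!
The bracket is `⁅x, y⁆ = D x y - D y x` with `D x = x₀ • A + x₁ • B`, where `A = ad e₀` shifts
`eᵢ ↦ eᵢ₊₁` and `B = ad e₁ = A² + N` for the rank-one map `N : e₂ ↦ e_{k+4}`. Such a bracket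
satisfies the Jacobi identity as soon as the operators `D x` pairwise commute and `D` vanishes on
their images. Here `A` and `B` take values in `span (e₂, …, e_{k+5})`, on which `D` vanishes, and
`A N = 0 = N A` because `A` kills `e_{k+4}` and never produces `e₂`; so `A` and `B` commute.
-/

section OfCommutingEnd

variable {R M : Type*} [CommRing R] [AddCommGroup M] [Module R M]
  (D : M →ₗ[R] Module.End R M) (hcomm : ∀ x y, Commute (D x) (D y))
  (hD : ∀ x y, D (D x y) = 0)

abbrev LieRing.ofCommutingEnd : LieRing M where
  bracket x y := D x y - D y x
  add_lie x y z := by simp only [map_add, LinearMap.add_apply]; abel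
  lie_add x y z := by simp only [map_add, LinearMap.add_apply]; abel
  lie_self x := sub_self _
  leibniz_lie x y z := by
    have hcomm' : ∀ a b c, D a (D b c) = D b (D a c) := fun a b c =>
      LinearMap.congr_fun (hcomm a b) c
    simp only [map_sub, hD, LinearMap.zero_apply, sub_zero, zero_sub]
    rw [hcomm' z x y, hcomm' z y x, hcomm' x y z]
    abel

abbrev LieAlgebra.ofCommutingEnd :
    letI := LieRing.ofCommutingEnd D hcomm hD; LieAlgebra R M :=
  letI := LieRing.ofCommutingEnd D hcomm hD
  { toModule := ‹Module R M›
    lie_smul t x y := by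
      show D x (t • y) - D (t • y) x = t • (D x y - D y x)
      simp only [map_smul, LinearMap.smul_apply, smul_sub] }

end OfCommutingEnd

/-- The paper's `μ` on `K^{k+6}`, with `eᵢ = Pi.single i 1`; a synonym, because
`Fin (k + 6) → K` already carries the pointwise (zero) bracket. -/
def Mu (K : Type*) [CommRing K] (k : ℕ) : Type _ := Fin (k + 6) → K

namespace Mu

variable (K : Type*) [CommRing K] (k : ℕ)

def adZero : Module.End K (Fin (k + 6) → K) :=
  Matrix.toLin' (Matrix.of fun j i : Fin (k + 6) =>
    if (j : ℕ) = i + 1 ∧ 2 ≤ (i : ℕ) ∧ (i : ℕ) ≤ k + 3 then 1 else 0)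

def corner : Module.End K (Fin (k + 6) → K) :=
  (LinearMap.proj ⟨2, by omega⟩).smulRight (Pi.single ⟨k + 4, by omega⟩ 1)

def adOne : Module.End K (Fin (k + 6) → K) := adZero K k ^ 2 + corner K k

def action : (Fin (k + 6) → K) →ₗ[K] Module.End K (Fin (k + 6) → K) :=
  (LinearMap.proj ⟨0, by omega⟩).smulRight (adZero K k) +
    (LinearMap.proj ⟨1, by omega⟩).smulRight (adOne K k)

variable {K k}

lemma adZero_single_of_le (i : ℕ) (h₂ : 2 ≤ i) (h₃ : i ≤ k + 3) :
    adZero K k (Pi.single ⟨i, by omega⟩ 1) = Pi.single ⟨i + 1, by omega⟩ 1 := by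
  ext j
  simp [adZero, Matrix.toLin'_apply, Pi.single_apply, Fin.ext_iff, h₂, h₃]

lemma adZero_single_eq_zero (i : Fin (k + 6)) (hi : (i : ℕ) ≤ 1 ∨ k + 4 ≤ i) :
    adZero K k (Pi.single i 1) = 0 := by
  ext j
  simp [adZero, Matrix.toLin'_apply]
  omega

lemma adZero_apply_eq_zero (v : Fin (k + 6) → K) (j : Fin (k + 6)) (hj : (j : ℕ) ≤ 2) :
    adZero K k v j = 0 := by
  simp only [adZero, Matrix.toLin'_apply, Matrix.mulVec, dotProduct, Matrix.of_apply]
  exact Finset.sum_eq_zero fun i _ => by rw [if_neg (by omega), zero_mul]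

lemma corner_apply (v : Fin (k + 6) → K) :
    corner K k v = v ⟨2, by omega⟩ • Pi.single ⟨k + 4, by omega⟩ 1 := rfl

lemma corner_single_eq_zero (i : Fin (k + 6)) (hi : (i : ℕ) ≠ 2) :
    corner K k (Pi.single i 1) = 0 := by
  rw [corner_apply, Pi.single_eq_of_ne (Fin.ne_of_val_ne (show 2 ≠ (i : ℕ) from hi.symm)),
    zero_smul]

lemma adZero_mul_corner : adZero K k * corner K k = 0 :=
  LinearMap.ext fun v => by
    rw [Module.End.mul_apply, corner_apply, map_smul, adZero_single_eq_zero _ (.inr le_rfl),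
      smul_zero, LinearMap.zero_apply]

lemma corner_mul_adZero : corner K k * adZero K k = 0 :=
  LinearMap.ext fun v => by
    rw [Module.End.mul_apply, corner_apply, adZero_apply_eq_zero _ _ le_rfl, zero_smul,
      LinearMap.zero_apply]

lemma commute_adZero_adOne : Commute (adZero K k) (adOne K k) :=
  ((Commute.refl _).pow_right 2).add_right (adZero_mul_corner.trans corner_mul_adZero.symm)

lemma adOne_apply (v : Fin (k + 6) → K) :
    adOne K k v = adZero K k (adZero K k v) + corner K k v := by
  rw [adOne, LinearMap.add_apply, pow_two, Module.End.mul_apply]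

lemma adOne_apply_eq_zero (v : Fin (k + 6) → K) (j : Fin (k + 6)) (hj : (j : ℕ) ≤ 1) :
    adOne K k v j = 0 := by
  rw [adOne_apply, Pi.add_apply, adZero_apply_eq_zero _ _ (by omega), corner_apply,
    Pi.smul_apply, Pi.single_eq_of_ne (Fin.ne_of_val_ne (show (j : ℕ) ≠ k + 4 by omega)),
    smul_zero, add_zero]

lemma adOne_single_two :
    adOne K k (Pi.single ⟨2, by omega⟩ 1) =
      Pi.single ⟨4, by omega⟩ 1 + Pi.single ⟨k + 4, by omega⟩ 1 := by
  rw [adOne_apply, adZero_single_of_le 2 le_rfl (by omega),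
    adZero_single_of_le 3 (by omega) (by omega), corner_apply, Pi.single_eq_same, one_smul]

lemma adOne_single_of_le (i : ℕ) (h₃ : 3 ≤ i) (h₄ : i ≤ k + 2) :
    adOne K k (Pi.single ⟨i, by omega⟩ 1) = Pi.single ⟨i + 2, by omega⟩ 1 := by
  rw [adOne_apply, adZero_single_of_le i (by omega) (by omega),
    adZero_single_of_le (i + 1) (by omega) (by omega),
    corner_single_eq_zero _ (show i ≠ 2 by omega), add_zero]

lemma adOne_single_eq_zero (i : Fin (k + 6)) (hi : (i : ℕ) ≤ 1 ∨ k + 3 ≤ i) :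
    adOne K k (Pi.single i 1) = 0 := by
  rw [adOne_apply, corner_single_eq_zero _ (by omega), add_zero]
  obtain hi | hi | hi : (i : ℕ) ≤ 1 ∨ (i : ℕ) = k + 3 ∨ k + 4 ≤ i := by omega
  · rw [adZero_single_eq_zero i (.inl hi), map_zero]
  · rw [show i = ⟨k + 3, by omega⟩ from Fin.ext hi,
      adZero_single_of_le (k + 3) (by omega) le_rfl, adZero_single_eq_zero _ (.inr le_rfl)]
  · rw [adZero_single_eq_zero i (.inr hi), map_zero]

lemma action_apply (x : Fin (k + 6) → K) :
    action K k x = x ⟨0, by omega⟩ • adZero K k + x ⟨1, by omega⟩ • adOne K k := rfl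

lemma commute_action (x y : Fin (k + 6) → K) : Commute (action K k x) (action K k y) := by
  simp only [action_apply, Commute, SemiconjBy, add_mul, mul_add, smul_mul_smul_comm,
    commute_adZero_adOne.eq]
  module

lemma action_apply_apply_eq_zero (x y : Fin (k + 6) → K) (j : Fin (k + 6))
    (hj : (j : ℕ) ≤ 1) :
    action K k x y j = 0 := by
  simp [action_apply, adZero_apply_eq_zero y j (by omega), adOne_apply_eq_zero y j hj]

lemma action_action (x y : Fin (k + 6) → K) : action K k (action K k x y) = 0 := by
  rw [action_apply, action_apply_apply_eq_zero _ _ _ zero_le_one,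
    action_apply_apply_eq_zero _ _ _ le_rfl, zero_smul, zero_smul, add_zero]

lemma action_single_zero : action K k (Pi.single ⟨0, by omega⟩ 1) = adZero K k := by
  rw [action_apply, Pi.single_eq_same, Pi.single_eq_of_ne (by simp), one_smul, zero_smul,
    add_zero]

lemma action_single_one : action K k (Pi.single ⟨1, by omega⟩ 1) = adOne K k := by
  rw [action_apply, Pi.single_eq_same, Pi.single_eq_of_ne (by simp), one_smul, zero_smul,
    zero_add]

lemma action_single_eq_zero (i : Fin (k + 6)) (hi : 2 ≤ (i : ℕ)) :
    action K k (Pi.single i 1) = 0 := by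
  rw [action_apply, Pi.single_eq_of_ne (Fin.ne_of_val_ne (show 0 ≠ (i : ℕ) by omega)),
    Pi.single_eq_of_ne (Fin.ne_of_val_ne (show 1 ≠ (i : ℕ) by omega)), zero_smul, zero_smul,
    add_zero]

instance : LieRing (Mu K k) :=
  LieRing.ofCommutingEnd (M := Fin (k + 6) → K) (action K k) commute_action action_action

instance : LieAlgebra K (Mu K k) :=
  LieAlgebra.ofCommutingEnd (M := Fin (k + 6) → K) (action K k) commute_action action_action

variable (K k) in
noncomputable def basis : Module.Basis (Fin (k + 6)) K (Mu K k) := Pi.basisFun K (Fin (k + 6))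

lemma basis_apply (i : Fin (k + 6)) : basis K k i = Pi.single i 1 := Pi.basisFun_apply K _ i

lemma lie_def (x y : Mu K k) : ⁅x, y⁆ = action K k x y - action K k y x := rfl

lemma lie_basis_zero (i : Fin (k + 6)) (hi : 2 ≤ (i : ℕ)) :
    ⁅basis K k ⟨0, by omega⟩, basis K k i⁆ = adZero K k (Pi.single i 1) := by
  rw [lie_def, basis_apply, basis_apply, action_single_zero, action_single_eq_zero i hi,
    LinearMap.zero_apply, sub_zero]

lemma lie_basis_one (i : Fin (k + 6)) (hi : 2 ≤ (i : ℕ)) :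
    ⁅basis K k ⟨1, by omega⟩, basis K k i⁆ = adOne K k (Pi.single i 1) := by
  rw [lie_def, basis_apply, basis_apply, action_single_one, action_single_eq_zero i hi,
    LinearMap.zero_apply, sub_zero]

lemma lie_basis_zero_one : ⁅basis K k ⟨0, by omega⟩, basis K k ⟨1, by omega⟩⁆ = 0 := by
  rw [lie_def, basis_apply, basis_apply, action_single_zero, action_single_one,
    adZero_single_eq_zero _ (.inl le_rfl), adOne_single_eq_zero _ (.inl zero_le_one), sub_zero]
  rfl

lemma lie_basis_eq_zero (i j : Fin (k + 6)) (hi : 2 ≤ (i : ℕ)) (hj : 2 ≤ (j : ℕ)) :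
    ⁅basis K k i, basis K k j⁆ = 0 := by
  rw [lie_def, basis_apply, basis_apply, action_single_eq_zero i hi, action_single_eq_zero j hj,
    LinearMap.zero_apply, LinearMap.zero_apply, sub_zero]
  rfl

lemma lie_basis_zero_of_le (i : ℕ) (h₂ : 2 ≤ i) (h₃ : i ≤ k + 3) :
    ⁅basis K k ⟨0, by omega⟩, basis K k ⟨i, by omega⟩⁆ =
      basis K k ⟨i + 1, by omega⟩ := by
  rw [lie_basis_zero _ h₂, adZero_single_of_le i h₂ h₃, basis_apply]

lemma lie_basis_zero_eq_zero (i : ℕ) (hi : k + 4 ≤ i) (h : i < k + 6) :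
    ⁅basis K k ⟨0, by omega⟩, basis K k ⟨i, h⟩⁆ = 0 := by
  rw [lie_basis_zero _ (show 2 ≤ i by omega), adZero_single_eq_zero _ (.inr hi)]
  rfl

lemma lie_basis_one_two :
    ⁅basis K k ⟨1, by omega⟩, basis K k ⟨2, by omega⟩⁆ =
      basis K k ⟨4, by omega⟩ + basis K k ⟨k + 4, by omega⟩ := by
  rw [lie_basis_one _ le_rfl, adOne_single_two, basis_apply, basis_apply]
  rfl

lemma lie_basis_one_of_le (i : ℕ) (h₃ : 3 ≤ i) (h₄ : i ≤ k + 2) :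
    ⁅basis K k ⟨1, by omega⟩, basis K k ⟨i, by omega⟩⁆ =
      basis K k ⟨i + 2, by omega⟩ := by
  rw [lie_basis_one _ (show 2 ≤ i by omega), adOne_single_of_le i h₃ h₄, basis_apply]

lemma lie_basis_one_eq_zero (i : ℕ) (hi : k + 3 ≤ i) (h : i < k + 6) :
    ⁅basis K k ⟨1, by omega⟩, basis K k ⟨i, h⟩⁆ = 0 := by
  rw [lie_basis_one _ (show 2 ≤ i by omega), adOne_single_eq_zero _ (.inr hi)]
  rfl

end Mu

theorem stmt18_general (K : Type) [Field K] (k : ℕ) (hk : 1 ≤ k) :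
    ∃ (L : Type) (iR : LieRing L) (iA : @LieAlgebra K L _ iR),
      @Stmt18Structure K _ k hk L iR iA :=
  ⟨Mu K k, _, _, Mu.basis K k, Mu.lie_basis_zero_of_le, Mu.lie_basis_one_two,
    Mu.lie_basis_one_of_le, Mu.lie_basis_zero_one,
    Mu.lie_basis_zero_eq_zero _ le_rfl _, Mu.lie_basis_zero_eq_zero _ (by omega) _,
    Mu.lie_basis_one_eq_zero _ le_rfl _, Mu.lie_basis_one_eq_zero _ (by omega) _,
    Mu.lie_basis_one_eq_zero _ (by omega) _,
    fun i j hi hij => Mu.lie_basis_eq_zero i j hi (by omega)⟩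

/-- For each `k ≥ 1`, the multiplication `μ = μ₀ + ψ_{1,4} + ψ_{1,4+k}` on the
`(k+6)`-dimensional space satisfies the Jacobi identity: there exists a Lie algebra with
these structure constants. -/
theorem stmt18 (K : Type) [Field K] [CharZero K] (k : ℕ) (hk : 1 ≤ k) :
    ∃ (L : Type) (iR : LieRing L) (iA : @LieAlgebra K L _ iR),
      @Stmt18Structure K _ k hk L iR iA :=
  stmt18_general K k hk
end
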